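/- If G is a d-regular finite simple graph with d ≥ 6, then ch_σ^e(G) ≤ 3: for every linear order on E(G) and every assignment to each edge e of a set L_e of three real numbers, there exists a weighting w with w(e) ∈ L_e for every edge e whose induced sequence colouring of the vertices is proper. -/

import Mathlib

/-!
Common definitions: sequence colourings induced by an edge weighting and a linear
order on the edge set of a finite simple graph.
-/

open Finset

variable {V : Type*}

/-- The list of edges incident to `v`, sorted in increasing order with respect to the
linear order `σ` on `E(G)`. -/
noncomputable def incEdges [Fintype V] [DecidableEq V] (G : SimpleGraph V) [DecidableRel G.Adj]
    (σ : LinearOrder G.edgeSet) (v : V) : List G.edgeSet :=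
  letI := σ
  ((Finset.univ : Finset G.edgeSet).filter (fun e : G.edgeSet => v ∈ (e : Sym2 V))).sort σ.le

/-- The induced sequence colouring: `c(v)` is the list of weights `w(e)` of the edges `e`
incident to `v`, written in increasing order of `e` with respect to `σ`. -/
noncomputable def seqColor [Fintype V] [DecidableEq V] (G : SimpleGraph V) [DecidableRel G.Adj]
    (σ : LinearOrder G.edgeSet) {α : Type*} (w : G.edgeSet → α) (v : V) : List α :=
  (incEdges G σ v).map w

/-- The induced sequence colouring is proper: adjacent vertices receive distinct sequences. -/
def ProperSeq [Fintype V] [DecidableEq V] (G : SimpleGraph V) [DecidableRel G.Adj]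
    (σ : LinearOrder G.edgeSet) (w : G.edgeSet → ℝ) : Prop :=
  ∀ u v : V, G.Adj u v → seqColor G σ w u ≠ seqColor G σ w v

/-!
The line graph of a `d`-regular graph is `(2d - 2)`-regular, so Hall's theorem gives an
injection `r` on edges with `r e` adjacent to `e`. Orient each edge `e` as `(a, b)` with
`a ∈ r e`, and let the partner of `e` be the edge at `b` in the position that `r e` occupies in
the sequence at `a`; by regularity it exists, and it differs from `r e`. Any weighting with
`w (r e) ≠ w (partner e)` for all `e` separates the sequences at `a` and `b`. Since `r` is a
bijection, these constraints form a functional graph, which is 2-degenerate, so lists of size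
three can be chosen from greedily.
-/

theorem List.apply_getD_idxOf_of_map_eq {α β : Type*} [BEq α] [LawfulBEq α]
    {l₁ l₂ : List α} {f : α → β} {x : α} (hx : x ∈ l₁) (h : l₁.map f = l₂.map f) (y : α) :
    f (l₂.getD (l₁.idxOf x) y) = f x := by
  have hi₁ : l₁.idxOf x < l₁.length := List.idxOf_lt_length_iff.mpr hx
  have hi₂ : l₁.idxOf x < l₂.length := by
    have hlen : l₁.length = l₂.length := by simpa using congrArg List.length h
    exact hlen ▸ hi₁
  have hval := congrArg (·[l₁.idxOf x]?) h
  simp only [List.getElem?_map, List.getElem?_eq_getElem hi₁, List.getElem?_eq_getElem hi₂,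
    Option.map_some, Option.some_inj, List.getElem_idxOf hi₁] at hval
  rw [List.getD_eq_getElem _ _ hi₂, hval]

section ChoiceFunctions

variable {α β : Type*} {L : α → Finset β} {f : α → α}

theorem exists_choice_forall_apply_ne_on (hL : ∀ a, 3 ≤ #(L a)) (hf : ∀ a, f a ≠ a)
    (S : Finset α) :
    ∃ w : α → β, (∀ a, w a ∈ L a) ∧ ∀ a ∈ S, f a ∈ S → w (f a) ≠ w a := by
  classical
  induction S using Finset.strongInduction with
  | H S ih =>
  rcases S.eq_empty_or_nonempty with rfl | hS
  · have hne (a : α) : (L a).Nonempty := card_pos.mp (by have := hL a; omega)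
    exact ⟨fun a => (hne a).choose, fun a => (hne a).choose_spec, by simp⟩
  -- a vertex `y` with at most one in-neighbour in `S` has at most two neighbours in `S`
  obtain ⟨y, hyS, hy⟩ :=
    exists_card_fiber_le_of_card_le_mul (s := S) (f := f) (n := 1) hS (by simp)
  obtain ⟨w, hwL, hw⟩ := ih (S.erase y) (erase_ssubset hyS)
  set F := insert (w (f y)) ({x ∈ S | f x = y}.image w)
  have hF : #F ≤ 2 := (card_insert_le _ _).trans (by simpa using card_image_le.trans hy)
  obtain ⟨c, hcL, hcF⟩ : ∃ c ∈ L y, c ∉ F :=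
    exists_mem_notMem_of_card_lt_card (by have := hL y; omega)
  refine ⟨Function.update w y c, fun a => ?_, fun a ha hfa => ?_⟩
  · by_cases h : a = y
    · subst h; simpa using hcL
    · simpa [h] using hwL a
  · by_cases hay : a = y
    · subst hay
      simp only [Function.update_self, Function.update_of_ne (hf a)]
      exact fun h => hcF (h ▸ mem_insert_self _ _)
    · by_cases hfay : f a = y
      · simp only [hfay, Function.update_self, Function.update_of_ne hay]
        exact fun h => hcF (mem_insert_of_mem (mem_image.mpr ⟨a, by simp [ha, hfay], h.symm⟩))
      · simp only [Function.update_of_ne hay, Function.update_of_ne hfay]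
        exact hw a (mem_erase.mpr ⟨hay, ha⟩) (mem_erase.mpr ⟨hfay, hfa⟩)

theorem exists_choice_forall_apply_ne [Fintype α] (hL : ∀ a, 3 ≤ #(L a))
    (hf : ∀ a, f a ≠ a) :
    ∃ w : α → β, (∀ a, w a ∈ L a) ∧ ∀ a, w (f a) ≠ w a := by
  obtain ⟨w, hwL, hw⟩ := exists_choice_forall_apply_ne_on hL hf univ
  exact ⟨w, hwL, fun a => hw a (mem_univ a) (mem_univ (f a))⟩

theorem exists_choice_forall_apply_ne_of_injective [Fintype α] (hL : ∀ a, 3 ≤ #(L a))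
    {P Q : α → α} (hP : Function.Injective P) (hPQ : ∀ a, Q a ≠ P a) :
    ∃ w : α → β, (∀ a, w a ∈ L a) ∧ ∀ a, w (Q a) ≠ w (P a) := by
  let P' := Equiv.ofBijective P (Finite.injective_iff_bijective.mp hP)
  obtain ⟨w, hwL, hw⟩ := exists_choice_forall_apply_ne hL (f := fun a => Q (P'.symm a))
    fun a => by simpa [P', Equiv.ofBijective_apply_symm_apply] using hPQ (P'.symm a)
  exact ⟨w, hwL, fun a => by simpa [P'] using hw (P a)⟩

end ChoiceFunctions

namespace SimpleGraph

variable [Fintype V] {G : SimpleGraph V} [DecidableRel G.Adj]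

theorem IsRegularOfDegree.exists_injective_adj {k : ℕ} (hG : G.IsRegularOfDegree k)
    (hk : 0 < k) :
    ∃ f : V → V, Function.Injective f ∧ ∀ v, G.Adj v (f v) := by
  classical
  have hall (S : Finset V) : #S ≤ #(S.biUnion fun v => G.neighborFinset v) := by
    refine Nat.le_of_mul_le_mul_right (Finset.card_mul_le_card_mul G.Adj (fun v hv => ?_)
      (fun u _ => ?_)) hk
    · rw [← hG.degree_eq v, ← card_neighborFinset_eq_degree]
      refine card_le_card fun u hu => ?_
      have hvu := (G.mem_neighborFinset _ _).mp hu
      simpa [bipartiteAbove] using ⟨⟨v, hv, hvu⟩, hvu⟩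
    · rw [← hG.degree_eq u, ← card_neighborFinset_eq_degree]
      exact card_le_card fun v hv => by
        simpa [bipartiteBelow, adj_comm] using (mem_filter.mp hv).2
  obtain ⟨f, hf, hadj⟩ :=
    (Finset.all_card_le_biUnion_card_iff_exists_injective fun v => G.neighborFinset v).mp hall
  exact ⟨f, hf, fun v => (G.mem_neighborFinset _ _).mp (hadj v)⟩

variable [DecidableEq V]

theorem card_filter_mem_edgeSet_eq_degree (v : V) :
    #{e : G.edgeSet | v ∈ (e : Sym2 V)} = G.degree v := by
  rw [← card_incidenceFinset_eq_degree, ← card_map (Function.Embedding.subtype _)]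
  congr 1
  ext e
  simp [incidenceSet, and_comm]

theorem degree_lineGraph_add_two [DecidableRel G.lineGraph.Adj] {e : G.edgeSet} {a b : V}
    (he : (e : Sym2 V) = s(a, b)) : G.lineGraph.degree e + 2 = G.degree a + G.degree b := by
  have hab : a ≠ b := (G.mem_edgeSet.mp (he ▸ e.2)).ne
  set A : Finset G.edgeSet := {y | a ∈ (y : Sym2 V)}
  set B : Finset G.edgeSet := {y | b ∈ (y : Sym2 V)}
  have hN : G.lineGraph.neighborFinset e = (A ∪ B).erase e := by
    ext y
    simp [A, B, lineGraph_adj_iff_exists, he, eq_comm (a := e)]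
  have hAB : A ∩ B = {e} := by
    ext y
    simp only [A, B, mem_inter, mem_filter, mem_univ, true_and, mem_singleton]
    rw [Sym2.mem_and_mem_iff hab, ← he, Subtype.ext_iff]
  have heA : e ∈ A ∪ B := by simp [A, he]
  have hcard := card_union_add_card_inter A B
  rw [hAB, card_singleton, card_filter_mem_edgeSet_eq_degree,
    card_filter_mem_edgeSet_eq_degree] at hcard
  rw [← card_neighborFinset_eq_degree, hN, card_erase_of_mem heA]
  have := card_pos.mpr ⟨e, heA⟩
  omega

theorem IsRegularOfDegree.lineGraph [DecidableRel G.lineGraph.Adj] {d : ℕ}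
    (hG : G.IsRegularOfDegree d) : G.lineGraph.IsRegularOfDegree (2 * d - 2) := by
  intro e
  obtain ⟨⟨a, b⟩, he⟩ := Quot.exists_rep (e : Sym2 V)
  have := degree_lineGraph_add_two he.symm
  rw [hG.degree_eq, hG.degree_eq] at this
  omega

end SimpleGraph

section SequenceColouring

variable [Fintype V] [DecidableEq V] {G : SimpleGraph V} [DecidableRel G.Adj]
  {σ : LinearOrder G.edgeSet}

theorem mem_incEdges {v : V} {e : G.edgeSet} : e ∈ incEdges G σ v ↔ v ∈ (e : Sym2 V) := by
  simp [incEdges]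

theorem length_incEdges (v : V) : (incEdges G σ v).length = G.degree v := by
  rw [incEdges, length_sort, SimpleGraph.card_filter_mem_edgeSet_eq_degree]

theorem mem_getD_idxOf_incEdges {a b : V} (hdeg : G.degree a ≤ G.degree b) {x : G.edgeSet}
    (hx : a ∈ (x : Sym2 V)) (y : G.edgeSet) :
    b ∈ ((incEdges G σ b).getD ((incEdges G σ a).idxOf x) y : Sym2 V) := by
  have hi : (incEdges G σ a).idxOf x < (incEdges G σ b).length := by
    have := List.idxOf_lt_length_iff.mpr (mem_incEdges (σ := σ) |>.mpr hx)
    rw [length_incEdges] at this ⊢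
    omega
  rw [List.getD_eq_getElem _ _ hi]
  exact mem_incEdges.mp (List.getElem_mem hi)

theorem properSeq_of_forall_edge {w : G.edgeSet → ℝ}
    (h : ∀ e : G.edgeSet,
      ∃ a b, s(a, b) = (e : Sym2 V) ∧ seqColor G σ w a ≠ seqColor G σ w b) :
    ProperSeq G σ w := by
  intro u v huv
  obtain ⟨a, b, hab, hne⟩ := h ⟨s(u, v), huv⟩
  rcases Sym2.eq_iff.mp hab with ⟨rfl, rfl⟩ | ⟨rfl, rfl⟩
  · exact hne
  · exact hne.symm

end SequenceColouring

/-- If `G` is `d`-regular with `d ≥ 6`, then `ch_σ^e(G) ≤ 3`. -/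
theorem stmt_7 [Fintype V] [DecidableEq V] (G : SimpleGraph V) [DecidableRel G.Adj]
    (d : ℕ) (hd : 6 ≤ d) (hreg : G.IsRegularOfDegree d)
    (σ : LinearOrder G.edgeSet)
    (L : G.edgeSet → Finset ℝ) (hL : ∀ e, (L e).card = 3) :
    ∃ w : G.edgeSet → ℝ, (∀ e, w e ∈ L e) ∧ ProperSeq G σ w := by
  classical
  obtain ⟨r, hr_inj, hr_adj⟩ := hreg.lineGraph.exists_injective_adj (by omega)
  have horient (e : G.edgeSet) : ∃ a b, s(a, b) = (e : Sym2 V) ∧ a ∈ (r e : Sym2 V) := by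
    obtain ⟨-, a, hae, har⟩ := SimpleGraph.lineGraph_adj_iff_exists.mp (hr_adj e)
    exact ⟨a, _, Sym2.other_spec hae, har⟩
  choose a b hab har using horient
  let partner (e : G.edgeSet) : G.edgeSet :=
    (incEdges G σ (b e)).getD ((incEdges G σ (a e)).idxOf (r e)) (r e)
  have hpartner (e : G.edgeSet) : partner e ≠ r e := by
    intro h
    have hb : b e ∈ (r e : Sym2 V) :=
      h ▸ mem_getD_idxOf_incEdges (by rw [hreg.degree_eq, hreg.degree_eq]) (har e) _
    have hne : a e ≠ b e := (G.mem_edgeSet.mp (hab e ▸ e.2)).ne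
    have hre : (r e : Sym2 V) = e := (hab e).symm ▸ (Sym2.mem_and_mem_iff hne).mp ⟨har e, hb⟩
    exact (hr_adj e).ne (Subtype.ext hre).symm
  obtain ⟨w, hwL, hw⟩ :=
    exists_choice_forall_apply_ne_of_injective (fun e => (hL e).ge) hr_inj hpartner
  refine ⟨w, hwL, properSeq_of_forall_edge fun e => ⟨a e, b e, hab e, fun hc => hw e ?_⟩⟩
  exact List.apply_getD_idxOf_of_map_eq (mem_incEdges.mpr (har e)) hc (r e)
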